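/- For S ⊆ ℕ^ℕ: S is guessable if and only if S_∞ = ∅. Equivalently (given Wadge's theorem that guessable = Δ⁰₂), S ∈ Δ⁰₂ if and only if S_∞ = ∅. -/

import Mathlib

open Filter Topology Classical

/-- The initial segment `f↾n` of an infinite sequence. -/
def res (f : ℕ → ℕ) (n : ℕ) : List ℕ := List.ofFn (fun i : Fin n => f i)

/-- `[X]`: the set of infinite sequences all of whose finite initial segments lie in `X`. -/
def seqsIn (X : Set (List ℕ)) : Set (ℕ → ℕ) := {f | ∀ n, res f n ∈ X}

/-- The simplified remainder `S_α`. -/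
noncomputable def SRem (S : Set (ℕ → ℕ)) (α : Ordinal.{0}) : Set (List ℕ) :=
  Ordinal.limitRecOn α Set.univ
    (fun _ prev => {x | x ∈ prev ∧ ∃ f g : ℕ → ℕ,
      f ∈ seqsIn prev ∧ g ∈ seqsIn prev ∧ res f x.length = x ∧ res g x.length = x ∧
      f ∈ S ∧ g ∉ S})
    (fun _ _ ih => ⋂ (β : Ordinal.{0}) (h : β < _), ih β h)

/-- Wadge's remainder `Rm_μ(A,B)`. -/
noncomputable def Rm (A B : Set (ℕ → ℕ)) (μ : Ordinal.{0}) : Set (ℕ → ℕ) :=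
  if μ = 0 then Set.univ
  else ⋂ (ν : {ν : Ordinal.{0} // ν < μ}),
    closure (Rm A B ν.1 ∩ A) ∩ closure (Rm A B ν.1 ∩ B)
termination_by μ
decreasing_by exact ν.2

/-- The least ordinal at which the simplified remainders stabilize. -/
noncomputable def alphaS (S : Set (ℕ → ℕ)) : Ordinal.{0} :=
  sInf {α | SRem S α = SRem S (α + 1)}

/-- `S_∞`, the stable value of the simplified remainders. -/
noncomputable def Sinf (S : Set (ℕ → ℕ)) : Set (List ℕ) := SRem S (alphaS S)

/-- `β(σ)`: the least ordinal `γ` with `σ ∉ S_γ`. -/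
noncomputable def betaOf (S : Set (ℕ → ℕ)) (σ : List ℕ) : Ordinal.{0} :=
  sInf {γ | σ ∉ SRem S γ}

/-- `G` guesses `S`. -/
def Guesses (G : List ℕ → Bool) (S : Set (ℕ → ℕ)) : Prop :=
  ∀ f : ℕ → ℕ, ∀ᶠ n in atTop, (G (res f n) = true ↔ f ∈ S)

def Guessable (S : Set (ℕ → ℕ)) : Prop := ∃ G, Guesses G S

/-- `G, H` witness that `S` is guessable with `< α` mind changes. -/
def WitnessMC (S : Set (ℕ → ℕ)) (α : Ordinal.{0}) (G : List ℕ → Bool)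
    (H : List ℕ → Ordinal.{0}) : Prop :=
  Guesses G S ∧ (∀ σ, H σ < α) ∧
  (∀ (f : ℕ → ℕ) (n : ℕ), H (res f (n + 1)) ≤ H (res f n)) ∧
  (∀ (f : ℕ → ℕ) (n : ℕ), G (res f (n + 1)) ≠ G (res f n) →
    H (res f (n + 1)) < H (res f n))

def GuessableMC (S : Set (ℕ → ℕ)) (α : Ordinal.{0}) : Prop := ∃ G H, WitnessMC S α G H

/-- An ordinal is even if it is of the form `λ + n` with `λ` limit or zero and `n` even. -/
def OrdEven (o : Ordinal.{0}) : Prop :=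
  ∃ (l : Ordinal.{0}) (n : ℕ), (l = 0 ∨ Order.IsSuccLimit l) ∧ o = l + n ∧ Even n

/-- The Hausdorff difference set `D_α((A_η)_{η<α})`. -/
def DSet (α : Ordinal.{0}) (A : Ordinal.{0} → Set (ℕ → ℕ)) : Set (ℕ → ℕ) :=
  {x | ∃ η, η < α ∧ x ∈ A η ∧ (∀ η', η' < η → x ∉ A η') ∧ (OrdEven η ↔ ¬ OrdEven α)}

/-- Membership in the class `D_α(Σ⁰₁)`. -/
def InDiff (α : Ordinal.{0}) (S : Set (ℕ → ℕ)) : Prop :=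
  ∃ A : Ordinal.{0} → Set (ℕ → ℕ), (∀ η, η < α → IsOpen (A η)) ∧
    (∀ η η', η ≤ η' → η' < α → A η ⊆ A η') ∧ S = DSet α A
/-- Wadge's `Rm_Ω(S)`: the stable value of `Rm_μ(S, Sᶜ)`. -/
noncomputable def RmInf (S : Set (ℕ → ℕ)) : Set (ℕ → ℕ) :=
  Rm S Sᶜ (sInf {μ : Ordinal.{0} | Rm S Sᶜ μ = Rm S Sᶜ (μ + 1)})

/-- The canonical guesser `G_S`. -/
noncomputable def GS (S : Set (ℕ → ℕ)) (σ : List ℕ) : Bool :=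
  if (∃ f : ℕ → ℕ, res f σ.length = σ ∧ f ∈ seqsIn (SRem S (betaOf S σ - 1))) then
    decide (∃ f : ℕ → ℕ, res f σ.length = σ ∧ f ∈ seqsIn (SRem S (betaOf S σ - 1)) ∧ f ∈ S)
  else if h : σ = [] then false
  else GS S σ.dropLast
termination_by σ.length
decreasing_by
  simp only [List.length_dropLast]
  exact Nat.sub_lt (List.length_pos_iff.mpr h) one_pos

/-- `S` is `F_σ`: a countable union of closed sets. -/
def IsFsigma (S : Set (ℕ → ℕ)) : Prop :=
  ∃ C : ℕ → Set (ℕ → ℕ), (∀ n, IsClosed (C n)) ∧ S = ⋃ n, C n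

/-- Boolean combinations of open sets. -/
inductive BoolComb : Set (ℕ → ℕ) → Prop
  | isOpen {s : Set (ℕ → ℕ)} : IsOpen s → BoolComb s
  | compl {s : Set (ℕ → ℕ)} : BoolComb s → BoolComb sᶜ
  | union {s t : Set (ℕ → ℕ)} : BoolComb s → BoolComb t → BoolComb (s ∪ t)

/-- The Borel class `Σ⁰_α` on Baire space (for `α ≥ 1`). -/
noncomputable def Sigma0 (α : Ordinal.{0}) : Set (Set (ℕ → ℕ)) :=
  if α = 1 then {s | IsOpen s}
  else {s | ∃ g : ℕ → Set (ℕ → ℕ), s = ⋃ n, g n ∧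
    ∀ n, ∃ β : {β : Ordinal.{0} // β < α}, 1 ≤ β.1 ∧ (g n)ᶜ ∈ Sigma0 β.1}
termination_by α
decreasing_by exact β.2

/-- The ambiguous Borel class `Δ⁰_α`. -/
noncomputable def Delta0 (α : Ordinal.{0}) : Set (Set (ℕ → ℕ)) :=
  {s | s ∈ Sigma0 α ∧ sᶜ ∈ Sigma0 α}

/-- The Boolean characteristic function. -/
noncomputable def chi (X : Set (ℕ → ℕ)) (f : ℕ → ℕ) : Bool := decide (f ∈ X)

/-- `G` guesses `S` based on the sequence of sets `Ss`. -/
def GuessesBased (G : List Bool → Bool) (Ss : ℕ → Set (ℕ → ℕ)) (S : Set (ℕ → ℕ)) : Prop :=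
  ∀ f : ℕ → ℕ, ∀ᶠ n in atTop,
    (G (List.ofFn (fun i : Fin n => chi (Ss i) f)) = true ↔ f ∈ S)

/-- `S` is `μ`th-order guessable. -/
def HigherGuessable (μ : Ordinal.{0}) (S : Set (ℕ → ℕ)) : Prop :=
  ∃ Ss : ℕ → Set (ℕ → ℕ), (∀ i, ∃ μi, μi < μ ∧ Ss i ∈ Delta0 (μi + 1)) ∧
    ∃ G : List Bool → Bool, GuessesBased G Ss S

/-!
Along any `f`, the least `γ` with `f↾n ∉ S_{γ+1}` for some `n` is attained, and from that `n` on
`f↾n ∈ S_γ \ S_{γ+1}`, so `f ∈ [S_γ]`. If `S_∞ = ∅`, guessing "some branch of `[S_γ]` through `σ`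
lies in `S`" is then eventually correct: were it wrong on `f ∉ S`, that branch together with `f`
would put `f↾n` into `S_{γ+1}`. Conversely a guesser writes `S` and its complement as `F_σ` sets.
If such an `S` had `S_∞ ≠ ∅`, then `S` and its complement would be dense `G_δ` subsets of the
nonempty Polish space `[S_∞]`, contradicting the Baire category theorem.
-/

@[simp] lemma res_length (f : ℕ → ℕ) (n : ℕ) : (res f n).length = n := List.length_ofFn

lemma res_eq_iff {f g : ℕ → ℕ} {n : ℕ} : res f n = res g n ↔ ∀ i < n, f i = g i := by
  simp [res, List.ofFn_inj, funext_iff, Fin.forall_iff]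

lemma res_eq_of_le {f g : ℕ → ℕ} {m n : ℕ} (hmn : m ≤ n) (h : res f n = res g n) :
    res f m = res g m :=
  res_eq_iff.2 fun i hi => res_eq_iff.1 h i (hi.trans_le hmn)

lemma continuous_restrict_fin (n : ℕ) : Continuous fun (f : ℕ → ℕ) (i : Fin n) => f i :=
  continuous_pi fun i => continuous_apply (i : ℕ)

lemma isClosed_setOf_res (P : List ℕ → Prop) (n : ℕ) : IsClosed {f : ℕ → ℕ | P (res f n)} :=
  (isClosed_discrete {v : Fin n → ℕ | P (List.ofFn v)}).preimage (continuous_restrict_fin n)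

lemma isClosed_seqsIn (X : Set (List ℕ)) : IsClosed (seqsIn X) := by
  simpa only [seqsIn, Set.ofPred_forall] using isClosed_iInter fun n => isClosed_setOf_res (· ∈ X) n

lemma tendsto_of_res_eq {g : ℕ → ℕ → ℕ} {f : ℕ → ℕ} (h : ∀ n, res (g n) n = res f n) :
    Tendsto g atTop (𝓝 f) := by
  refine tendsto_pi_nhds.2 fun i => ?_
  rw [nhds_discrete, tendsto_pure]
  filter_upwards [eventually_gt_atTop i] with n hn using res_eq_iff.1 (h n) i hn

lemma mem_closure_of_forall_res {A : Set (ℕ → ℕ)} {f : ℕ → ℕ}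
    (h : ∀ n, ∃ g ∈ A, res g n = res f n) : f ∈ closure A := by
  choose g hgA hg using h
  exact mem_closure_of_tendsto (tendsto_of_res_eq hg) (Eventually.of_forall hgA)

lemma dense_preimage_val_seqsIn {X : Set (List ℕ)} {T : Set (ℕ → ℕ)}
    (h : ∀ σ ∈ X, ∃ f ∈ seqsIn X ∩ T, res f σ.length = σ) :
    Dense (Subtype.val ⁻¹' T : Set (seqsIn X)) := by
  rw [Subtype.dense_iff, Subtype.image_preimage_coe]
  refine fun f hf => mem_closure_of_forall_res fun n => ?_
  obtain ⟨g, hg, hgf⟩ := h _ (hf n)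
  exact ⟨g, hg, by rwa [res_length] at hgf⟩

section DeltaTwo

variable {S : Set (ℕ → ℕ)}

lemma IsFsigma.isGδ_compl (h : IsFsigma S) : IsGδ Sᶜ := by
  obtain ⟨C, hC, rfl⟩ := h
  rw [Set.compl_iUnion]
  exact .iInter_of_isOpen fun n => (hC n).isOpen_compl

lemma isFsigma_of_guesses {G : List ℕ → Bool} (hG : Guesses G S) : IsFsigma S := by
  refine ⟨fun N => ⋂ n ≥ N, {f | G (res f n) = true},
    fun N => isClosed_biInter fun n _ => isClosed_setOf_res (fun l => G l = true) n, ?_⟩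
  ext f
  simp only [Set.mem_iUnion, Set.mem_iInter, Set.mem_ofPred_eq]
  refine ⟨fun hf => ?_, fun ⟨N, hN⟩ => ?_⟩
  · obtain ⟨N, hN⟩ := eventually_atTop.1 (hG f)
    exact ⟨N, fun n hn => (hN n hn).2 hf⟩
  · obtain ⟨n, hGf, hn⟩ := ((hG f).and (eventually_ge_atTop N)).exists
    exact hGf.1 (hN n hn)

lemma guesses_compl {G : List ℕ → Bool} (hG : Guesses G S) : Guesses (fun σ => !G σ) Sᶜ :=
  fun f => (hG f).mono fun n hn => by simp [← hn]

lemma Guessable.isGδ_and_isFsigma (h : Guessable S) : IsGδ S ∧ IsFsigma S := by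
  obtain ⟨G, hG⟩ := h
  exact ⟨by simpa using (isFsigma_of_guesses (guesses_compl hG)).isGδ_compl,
    isFsigma_of_guesses hG⟩

end DeltaTwo

section Remainders

variable (S : Set (ℕ → ℕ))

lemma SRem_zero : SRem S 0 = Set.univ :=
  Ordinal.limitRecOn_zero _ _ _

lemma SRem_add_one (β : Ordinal.{0}) :
    SRem S (β + 1) = {x | x ∈ SRem S β ∧ ∃ f g : ℕ → ℕ,
      f ∈ seqsIn (SRem S β) ∧ g ∈ seqsIn (SRem S β) ∧ res f x.length = x ∧ res g x.length = x ∧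
      f ∈ S ∧ g ∉ S} :=
  Ordinal.limitRecOn_add_one _ _ _ _

lemma SRem_limit {l : Ordinal.{0}} (hl : Order.IsSuccLimit l) :
    SRem S l = ⋂ β < l, SRem S β :=
  Ordinal.limitRecOn_limit _ _ _ _ hl

lemma SRem_add_one_subset (β : Ordinal.{0}) : SRem S (β + 1) ⊆ SRem S β := by
  rw [SRem_add_one]
  exact fun x hx => hx.1

lemma SRem_antitone : Antitone (SRem S) := by
  intro γ δ hγδ
  induction δ using Ordinal.limitRecOn with
  | zero => rw [nonpos_iff_eq_zero.1 hγδ]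
  | add_one β ih =>
    rcases hγδ.lt_or_eq with hlt | rfl
    · exact (SRem_add_one_subset S β).trans (ih (Order.lt_add_one_iff.1 hlt))
    · exact subset_rfl
  | limit l hl _ =>
    rcases hγδ.lt_or_eq with hlt | rfl
    · rw [SRem_limit S hl]
      exact Set.biInter_subset_of_mem hlt
    · exact subset_rfl

lemma exists_SRem_eq_SRem_add_one : ∃ α, SRem S α = SRem S (α + 1) := by
  by_contra! h
  have : StrictAnti (SRem S) := fun a b hab =>
    (SRem_antitone S (Order.add_one_le_of_lt hab)).trans_lt
      (lt_of_le_of_ne (SRem_add_one_subset S a) (h a).symm)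
  exact not_small_ordinal.{0} (small_of_injective this.injective)

lemma Sinf_eq_SRem_add_one : Sinf S = SRem S (alphaS S + 1) :=
  csInf_mem (exists_SRem_eq_SRem_add_one S)

lemma exists_extensions_of_mem_Sinf {σ : List ℕ} (hσ : σ ∈ Sinf S) :
    ∃ f g : ℕ → ℕ, f ∈ seqsIn (Sinf S) ∧ g ∈ seqsIn (Sinf S) ∧
      res f σ.length = σ ∧ res g σ.length = σ ∧ f ∈ S ∧ g ∉ S := by
  rw [Sinf_eq_SRem_add_one, SRem_add_one] at hσ
  exact hσ.2

lemma res_mem_SRem_of_le (γ : Ordinal.{0}) {f : ℕ → ℕ} {m n : ℕ} (hmn : m ≤ n)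
    (h : res f n ∈ SRem S γ) : res f m ∈ SRem S γ := by
  induction γ using Ordinal.limitRecOn with
  | zero => simp [SRem_zero]
  | add_one β ih =>
    rw [SRem_add_one] at h ⊢
    obtain ⟨hβ, g, g', hg, hg', hgf, hg'f, hgS, hg'S⟩ := h
    rw [res_length] at hgf hg'f
    refine ⟨ih hβ, g, g', hg, hg', ?_, ?_, hgS, hg'S⟩ <;> rw [res_length]
    exacts [res_eq_of_le hmn hgf, res_eq_of_le hmn hg'f]
  | limit l hl ih =>
    rw [SRem_limit S hl, Set.mem_iInter₂] at h ⊢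
    exact fun β hβ => ih β hβ (h β hβ)

lemma mem_SRem_of_forall_mem_add_one {σ : List ℕ} {γ : Ordinal.{0}}
    (h : ∀ δ < γ, σ ∈ SRem S (δ + 1)) : σ ∈ SRem S γ := by
  rcases Ordinal.zero_or_succ_or_isSuccLimit γ with rfl | ⟨δ, rfl⟩ | hl
  · simp [SRem_zero]
  · exact h δ (Order.lt_succ δ)
  · rw [SRem_limit S hl, Set.mem_iInter₂]
    exact fun δ hδ => SRem_add_one_subset S δ (h δ hδ)

lemma eq_of_mem_SRem_diff {σ : List ℕ} {γ γ' : Ordinal.{0}}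
    (h : σ ∈ SRem S γ \ SRem S (γ + 1)) (h' : σ ∈ SRem S γ' \ SRem S (γ' + 1)) : γ = γ' := by
  by_contra hne
  rcases lt_or_gt_of_ne hne with hlt | hlt
  · exact h.2 (SRem_antitone S (Order.add_one_le_of_lt hlt) h'.1)
  · exact h'.2 (SRem_antitone S (Order.add_one_le_of_lt hlt) h.1)

lemma exists_eventually_res_mem_SRem_diff (hS : Sinf S = ∅) (f : ℕ → ℕ) :
    ∃ γ N, ∀ n ≥ N, res f n ∈ SRem S γ \ SRem S (γ + 1) := by
  set L := {γ | ∃ N, res f N ∉ SRem S (γ + 1)}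
  have hL : L.Nonempty :=
    ⟨alphaS S, 0, fun h => Set.eq_empty_iff_forall_notMem.1 hS _ (SRem_add_one_subset S _ h)⟩
  obtain ⟨N, hN⟩ := csInf_mem hL
  refine ⟨sInf L, N, fun n hn => ⟨mem_SRem_of_forall_mem_add_one S fun δ hδ => ?_,
    fun h => hN (res_mem_SRem_of_le S _ hn h)⟩⟩
  by_contra h
  exact notMem_of_lt_csInf hδ (OrderBot.bddBelow L) ⟨n, h⟩

end Remainders

noncomputable def levelGuess (S : Set (ℕ → ℕ)) (σ : List ℕ) : Bool :=
  decide (∃ γ, σ ∈ SRem S γ \ SRem S (γ + 1) ∧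
    ∃ g ∈ seqsIn (SRem S γ) ∩ S, res g σ.length = σ)

lemma guesses_levelGuess {S : Set (ℕ → ℕ)} (hS : Sinf S = ∅) : Guesses (levelGuess S) S := by
  intro f
  obtain ⟨γ, N, hN⟩ := exists_eventually_res_mem_SRem_diff S hS f
  have hf : f ∈ seqsIn (SRem S γ) := fun m =>
    res_mem_SRem_of_le S γ (le_max_left m N) (hN _ (le_max_right m N)).1
  refine eventually_atTop.2 ⟨N, fun n hn => ?_⟩
  simp only [levelGuess, decide_eq_true_eq, res_length]
  constructor
  · rintro ⟨γ', hγ', g, ⟨hg, hgS⟩, hgf⟩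
    obtain rfl := eq_of_mem_SRem_diff S hγ' (hN n hn)
    by_contra hfS
    refine (hN n hn).2 ?_
    rw [SRem_add_one]
    exact ⟨(hN n hn).1, g, f, hg, hf, by simpa using hgf, by simp, hgS, hfS⟩
  · exact fun hfS => ⟨γ, hN n hn, f, ⟨hf, hfS⟩, rfl⟩

lemma not_dense_compl_of_isGδ {X : Type*} [TopologicalSpace X] [BaireSpace X] [Nonempty X]
    {s : Set X} (hs : IsGδ s) (hsc : IsGδ sᶜ) (hd : Dense s) : ¬ Dense sᶜ := fun hdc =>
  let ⟨_, hx, hxc⟩ := (hd.inter_of_Gδ hs hsc hdc).nonempty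
  hxc hx

lemma Sinf_eq_empty_of_isGδ_of_isFsigma {S : Set (ℕ → ℕ)} (hGδ : IsGδ S) (hFσ : IsFsigma S) :
    Sinf S = ∅ := by
  by_contra hne
  obtain ⟨σ, hσ⟩ := Set.nonempty_iff_ne_empty.2 hne
  have : PolishSpace (seqsIn (Sinf S)) := (isClosed_seqsIn _).polishSpace
  obtain ⟨f, -, hf, -⟩ := exists_extensions_of_mem_Sinf S hσ
  have : Nonempty (seqsIn (Sinf S)) := ⟨⟨f, hf⟩⟩
  refine not_dense_compl_of_isGδ (X := seqsIn (Sinf S)) (hGδ.preimage continuous_subtype_val)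
    (hFσ.isGδ_compl.preimage continuous_subtype_val) ?_ ?_
  · refine dense_preimage_val_seqsIn fun τ hτ => ?_
    obtain ⟨f, -, hf, -, hfτ, -, hfS, -⟩ := exists_extensions_of_mem_Sinf S hτ
    exact ⟨f, ⟨hf, hfS⟩, hfτ⟩
  · refine dense_preimage_val_seqsIn (T := Sᶜ) fun τ hτ => ?_
    obtain ⟨-, g, -, hg, -, hgτ, -, hgS⟩ := exists_extensions_of_mem_Sinf S hτ
    exact ⟨g, ⟨hg, hgS⟩, hgτ⟩

theorem stmt6 (S : Set (ℕ → ℕ)) :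
    (Guessable S ↔ Sinf S = ∅) ∧ ((IsGδ S ∧ IsFsigma S) ↔ Sinf S = ∅) := by
  have hΔ : IsGδ S ∧ IsFsigma S → Sinf S = ∅ := fun h =>
    Sinf_eq_empty_of_isGδ_of_isFsigma h.1 h.2
  have hG : Sinf S = ∅ → Guessable S := fun h => ⟨_, guesses_levelGuess h⟩
  exact ⟨⟨fun h => hΔ h.isGδ_and_isFsigma, hG⟩, ⟨hΔ, fun h => (hG h).isGδ_and_isFsigma⟩⟩
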